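/- arXiv:2309.12007 — 6 statements merged into one kernel-verified Lean document; each statement's English description precedes it below -/
import Mathlib

section
/- Let N, N', N'' be submodules of M such that N' ⊆ N'' and N'' is n-comparable with N. Then N + N' is n-comparable with N. -/
/-- The Krull dimension of the support of a module, with `⊥` (i.e. `-∞`)
for the zero module. -/
noncomputable def dimSupp (R : Type*) [CommRing R] (P : Type*) [AddCommGroup P]
    [Module R P] : WithBot (WithTop ℕ) :=
  Order.krullDim (Module.support R P)

/-- Two submodules `N₁, N₂` of `M` are `n`-comparable if the supports of both
`N₁/(N₁ ⊓ N₂)` and `N₂/(N₁ ⊓ N₂)` have Krull dimension `< n`. -/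
def NComparable {R : Type*} [CommRing R] {M : Type*} [AddCommGroup M] [Module R M]
    (n : ℕ) (N₁ N₂ : Submodule R M) : Prop :=
  dimSupp R (N₁ ⧸ ((N₁ ⊓ N₂).comap N₁.subtype)) < (n : WithBot (WithTop ℕ)) ∧
  dimSupp R (N₂ ⧸ ((N₁ ⊓ N₂).comap N₂.subtype)) < (n : WithBot (WithTop ℕ))

/-!
Everything reduces to the second isomorphism theorem: `(N + N') / N ≅ N' / (N' ∩ N)`, which
embeds into `N'' / (N'' ∩ N)` since `N' ⊆ N''`, while `N / ((N + N') ∩ N) = 0`.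
-/

section dimSupp

variable {R : Type*} [CommRing R] {P Q : Type*} [AddCommGroup P] [Module R P]
  [AddCommGroup Q] [Module R Q]

lemma dimSupp_le_of_injective (f : P →ₗ[R] Q) (hf : Function.Injective f) :
    dimSupp R P ≤ dimSupp R Q :=
  Order.krullDim_le_of_strictMono (Set.inclusion (Module.support_subset_of_injective f hf))
    fun _ _ ↦ id

lemma dimSupp_congr (e : P ≃ₗ[R] Q) : dimSupp R P = dimSupp R Q := by
  rw [dimSupp, dimSupp, e.support_eq]

lemma dimSupp_of_subsingleton [Subsingleton P] : dimSupp R P = ⊥ := by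
  rw [dimSupp, Module.support_eq_empty]
  exact Order.krullDim_eq_bot

end dimSupp

section relDimSupp

variable {R : Type*} [CommRing R] {M : Type*} [AddCommGroup M] [Module R M]

noncomputable def relDimSupp (A B : Submodule R M) : WithBot (WithTop ℕ) :=
  dimSupp R (A ⧸ B.comap A.subtype)

lemma Submodule.comap_subtype_inf_left (A B : Submodule R M) :
    (A ⊓ B).comap A.subtype = B.comap A.subtype := by
  rw [Submodule.comap_inf, Submodule.comap_subtype_self, top_inf_eq]

lemma nComparable_iff {n : ℕ} {N₁ N₂ : Submodule R M} :
    NComparable n N₁ N₂ ↔ relDimSupp N₁ N₂ < n ∧ relDimSupp N₂ N₁ < n := by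
  rw [NComparable, Submodule.comap_subtype_inf_left, inf_comm,
    Submodule.comap_subtype_inf_left, relDimSupp, relDimSupp]

lemma relDimSupp_mono_left {A A' : Submodule R M} (h : A ≤ A') (B : Submodule R M) :
    relDimSupp A B ≤ relDimSupp A' B := by
  let g := (B.comap A'.subtype).mkQ ∘ₗ Submodule.inclusion h
  have hker : B.comap A.subtype = LinearMap.ker g := by
    rw [LinearMap.ker_comp, Submodule.ker_mkQ, ← Submodule.comap_comp,
      Submodule.subtype_comp_inclusion]
  refine dimSupp_le_of_injective ((B.comap A.subtype).liftQ g hker.le) ?_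
  rw [← LinearMap.ker_eq_bot]
  exact Submodule.ker_liftQ_eq_bot' _ _ hker

lemma relDimSupp_sup_left (A B : Submodule R M) : relDimSupp (B ⊔ A) B = relDimSupp A B := by
  rw [relDimSupp, relDimSupp, sup_comm, ← Submodule.comap_subtype_inf_left A B]
  exact (dimSupp_congr (LinearMap.quotientInfEquivSupQuotient A B)).symm

lemma relDimSupp_of_le {A B : Submodule R M} (h : A ≤ B) : relDimSupp A B = ⊥ := by
  rw [relDimSupp, Submodule.comap_subtype_eq_top.2 h]
  exact dimSupp_of_subsingleton

end relDimSupp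

/-- If `N' ⊆ N''` and `N''` is `n`-comparable with `N`, then `N + N'` is
`n`-comparable with `N`. -/
theorem nComparable_sup {R : Type*} [CommRing R] {M : Type*} [AddCommGroup M]
    [Module R M] (n : ℕ) (N N' N'' : Submodule R M) (h₁ : N' ≤ N'')
    (h₂ : NComparable n N'' N) : NComparable n (N ⊔ N') N := by
  rw [nComparable_iff] at h₂ ⊢
  refine ⟨?_, ?_⟩
  · calc relDimSupp (N ⊔ N') N = relDimSupp N' N := relDimSupp_sup_left N' N
      _ ≤ relDimSupp N'' N := relDimSupp_mono_left h₁ N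
      _ < n := h₂.1
  · rw [relDimSupp_of_le le_sup_left]
    exact WithBot.bot_lt_coe _
end

section
/- Let N, N', N'' be submodules of M such that N'' ⊆ N' and N'' is n-comparable with N. Then N ∩ N' is n-comparable with N. -/
section dimSupp

variable {R : Type*} [CommRing R]

lemma dimSupp_eq_bot_of_subsingleton (P : Type*) [AddCommGroup P] [Module R P]
    [Subsingleton P] : dimSupp R P = ⊥ := by
  have : IsEmpty (Module.support R P) := by
    rw [Module.support_eq_empty_iff.mpr ‹_›]
    infer_instance
  exact Order.krullDim_eq_bot

lemma dimSupp_le_of_surjective {P Q : Type*} [AddCommGroup P] [Module R P] [AddCommGroup Q]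
    [Module R Q] (f : P →ₗ[R] Q) (hf : Function.Surjective f) : dimSupp R Q ≤ dimSupp R P :=
  Order.krullDim_le_of_strictMono (Set.inclusion (Module.support_subset_of_surjective f hf))
    fun _ _ h ↦ h

lemma dimSupp_quotient_anti {M : Type*} [AddCommGroup M] [Module R M] {p q : Submodule R M}
    (h : p ≤ q) : dimSupp R (M ⧸ q) ≤ dimSupp R (M ⧸ p) :=
  dimSupp_le_of_surjective (Submodule.factor h) (Submodule.factor_surjective h)

lemma dimSupp_quotient_comap_subtype_eq_bot {M : Type*} [AddCommGroup M] [Module R M]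
    {N₁ N₂ : Submodule R M} (h : N₁ ≤ N₂) : dimSupp R (N₁ ⧸ N₂.comap N₁.subtype) = ⊥ :=
  have := Submodule.Quotient.subsingleton_iff.mpr (Submodule.comap_subtype_eq_top.mpr h)
  dimSupp_eq_bot_of_subsingleton _

end dimSupp

/-- If `N'' ⊆ N'` and `N''` is `n`-comparable with `N`, then `N ∩ N'` is
`n`-comparable with `N`. -/
theorem nComparable_inf {R : Type*} [CommRing R] {M : Type*} [AddCommGroup M]
    [Module R M] (n : ℕ) (N N' N'' : Submodule R M) (h₁ : N'' ≤ N')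
    (h₂ : NComparable n N'' N) : NComparable n (N ⊓ N') N := by
  constructor
  · rw [dimSupp_quotient_comap_subtype_eq_bot (le_inf le_rfl inf_le_left)]
    exact WithBot.bot_lt_coe _
  · have hle : N'' ⊓ N ≤ N ⊓ N' ⊓ N := fun x hx ↦ ⟨⟨hx.2, h₁ hx.1⟩, hx.2⟩
    exact (dimSupp_quotient_anti (Submodule.comap_mono hle)).trans_lt h₂.2
end

section
/- Let N, N', N'' be submodules of M such that N' ⊆ N'' and N'' is fd-comparable with N. Then N + N' is fd-comparable with N. -/
/-- Two submodules `N₁, N₂` of a module `M` over a (not necessarily commutative)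
ring `A` are fd-comparable if both `N₁/(N₁ ⊓ N₂)` and `N₂/(N₁ ⊓ N₂)` have finite
length as `A`-modules. -/
def FdComparable {A : Type*} [Ring A] {M : Type*} [AddCommGroup M] [Module A M]
    (N₁ N₂ : Submodule A M) : Prop :=
  IsFiniteLength A (N₁ ⧸ ((N₁ ⊓ N₂).comap N₁.subtype)) ∧
  IsFiniteLength A (N₂ ⧸ ((N₁ ⊓ N₂).comap N₂.subtype))

/-!
`(N + N')/N ≅ N'/(N' ∩ N)`, and for `N' ⊆ N''` the module `N'/(N' ∩ N)` embeds into
`N''/(N'' ∩ N)`, which has finite length by assumption. The other quotient `N/N` is zero.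
-/

open Submodule

section

variable {A M : Type*} [Ring A] [AddCommGroup M] [Module A M]

namespace Submodule

theorem isFiniteLength_quotient_comap_subtype_of_le {N₁ N₂ : Submodule A M} (h : N₁ ≤ N₂)
    (P : Submodule A M) (hN₂ : IsFiniteLength A (N₂ ⧸ P.comap N₂.subtype)) :
    IsFiniteLength A (N₁ ⧸ P.comap N₁.subtype) := by
  have hcomap : (P.comap N₂.subtype).comap (inclusion h) = P.comap N₁.subtype := by
    rw [← comap_comp, subtype_comp_inclusion]
  refine hN₂.of_injective (f := mapQ _ _ (inclusion h) hcomap.ge) ?_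
  rw [← LinearMap.ker_eq_bot, ker_mapQ, hcomap, mkQ_map_self]

theorem isFiniteLength_sup_quotient_iff (N N' : Submodule A M) :
    IsFiniteLength A (↥(N' ⊔ N) ⧸ N.comap (N' ⊔ N).subtype) ↔
      IsFiniteLength A (N' ⧸ N.comap N'.subtype) := by
  have e := LinearMap.quotientInfEquivSupQuotient N' N
  rw [comap_subtype_self, top_inf_eq] at e
  exact ⟨fun h ↦ h.of_injective e.injective, fun h ↦ h.of_surjective e.surjective⟩

end Submodule

theorem FdComparable.isFiniteLength_left {N₁ N₂ : Submodule A M} (h : FdComparable N₁ N₂) :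
    IsFiniteLength A (N₁ ⧸ N₂.comap N₁.subtype) := by
  have h₁ := h.1
  rwa [comap_inf, comap_subtype_self, top_inf_eq] at h₁

theorem fdComparable_iff_of_le {N₁ N₂ : Submodule A M} (h : N₂ ≤ N₁) :
    FdComparable N₁ N₂ ↔ IsFiniteLength A (N₁ ⧸ N₂.comap N₁.subtype) := by
  refine ⟨FdComparable.isFiniteLength_left, fun hN₁ ↦ ⟨?_, ?_⟩⟩
  · rwa [inf_eq_right.mpr h]
  · rw [inf_eq_right.mpr h, comap_subtype_self]
    have : Subsingleton (N₂ ⧸ (⊤ : Submodule A N₂)) := Submodule.Quotient.subsingleton_iff.mpr rfl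
    exact .of_subsingleton

end

/-- If `N' ⊆ N''` and `N''` is fd-comparable with `N`, then `N + N'` is
fd-comparable with `N`. -/
theorem fdComparable_sup {A : Type*} [Ring A] {M : Type*} [AddCommGroup M]
    [Module A M] (N N' N'' : Submodule A M) (h₁ : N' ≤ N'')
    (h₂ : FdComparable N'' N) : FdComparable (N ⊔ N') N := by
  rw [fdComparable_iff_of_le le_sup_left, sup_comm, isFiniteLength_sup_quotient_iff]
  exact isFiniteLength_quotient_comap_subtype_of_le h₁ N h₂.isFiniteLength_left
end

section
/- Let N, N', N'' be submodules of M such that N'' ⊆ N' and N'' is fd-comparable with N. Then N ∩ N' is fd-comparable with N. -/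
section

variable {A M : Type*} [Ring A] [AddCommGroup M] [Module A M]

theorem Submodule.isFiniteLength_quotient_of_le {p q : Submodule A M} (hpq : p ≤ q)
    (hp : IsFiniteLength A (M ⧸ p)) : IsFiniteLength A (M ⧸ q) :=
  hp.of_surjective (factor_surjective hpq)

theorem isFiniteLength_quotient_comap_inf_of_le {N₁ N₂ : Submodule A M} (h : N₁ ≤ N₂) :
    IsFiniteLength A (N₁ ⧸ (N₁ ⊓ N₂).comap N₁.subtype) := by
  have : Subsingleton (N₁ ⧸ (N₁ ⊓ N₂).comap N₁.subtype) := by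
    rw [Submodule.Quotient.subsingleton_iff, Submodule.comap_subtype_eq_top]
    exact le_inf le_rfl h
  exact .of_subsingleton

end

/-- If `N'' ⊆ N'` and `N''` is fd-comparable with `N`, then `N ∩ N'` is
fd-comparable with `N`. -/
theorem fdComparable_inf {A : Type*} [Ring A] {M : Type*} [AddCommGroup M]
    [Module A M] (N N' N'' : Submodule A M) (h₁ : N'' ≤ N')
    (h₂ : FdComparable N'' N) : FdComparable (N ⊓ N') N := by
  refine ⟨isFiniteLength_quotient_comap_inf_of_le inf_le_left, ?_⟩
  have hle : N'' ⊓ N ≤ N ⊓ N' ⊓ N :=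
    le_inf (le_inf inf_le_right (inf_le_left.trans h₁)) inf_le_right
  exact Submodule.isFiniteLength_quotient_of_le (Submodule.comap_mono hle) h₂.2
end

section
/- Let Q be a submodule of M which is Noetherian as an A-module, and let N ⊆ Q be a submodule. Then the set of submodules P ⊆ Q that are fd-comparable with N has a greatest element, i.e., there exists a submodule P₀ ⊆ Q fd-comparable with N such that every submodule P ⊆ Q fd-comparable with N satisfies P ⊆ P₀. -/
theorem SupClosed.exists_isGreatest_of_wellFoundedGT {α : Type*} [SemilatticeSup α]
    [WellFoundedGT α] {s : Set α} (hs : SupClosed s) (hne : s.Nonempty) :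
    ∃ a, IsGreatest s a := by
  obtain ⟨a, ha⟩ := WellFoundedGT.exists_maximal ‹_› s hne
  exact ⟨a, ha.prop, fun b hb => le_sup_left.trans (ha.2 (hs hb ha.prop) le_sup_right)⟩

section

variable {A M : Type*} [Ring A] [AddCommGroup M] [Module A M]

theorem IsFiniteLength.prod {M₁ M₂ : Type*} [AddCommGroup M₁] [Module A M₁] [AddCommGroup M₂]
    [Module A M₂] (h₁ : IsFiniteLength A M₁) (h₂ : IsFiniteLength A M₂) :
    IsFiniteLength A (M₁ × M₂) := by
  rw [isFiniteLength_iff_isNoetherian_isArtinian] at *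
  obtain ⟨_, _⟩ := h₁
  obtain ⟨_, _⟩ := h₂
  exact ⟨inferInstance, inferInstance⟩

namespace Submodule

theorem exists_isGreatest_of_supClosed {Q : Submodule A M} [IsNoetherian A Q]
    {s : Set (Submodule A M)} (hsQ : ∀ P ∈ s, P ≤ Q) (hs : SupClosed s) (hne : s.Nonempty) :
    ∃ P, IsGreatest s P := by
  have map_comap_of_mem : ∀ P ∈ s, (P.comap Q.subtype).map Q.subtype = P := fun P hP => by
    rw [map_comap_subtype, inf_eq_right.mpr (hsQ P hP)]
  let t : Set (Submodule A Q) := {P | P.map Q.subtype ∈ s}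
  have ht : SupClosed t := fun P₁ h₁ P₂ h₂ => by
    simpa only [t, Set.mem_ofPred_eq, map_sup] using hs h₁ h₂
  obtain ⟨P, hP⟩ := hne
  obtain ⟨G, hGt, hG⟩ := ht.exists_isGreatest_of_wellFoundedGT
    ⟨P.comap Q.subtype, show _ ∈ s by rwa [map_comap_of_mem P hP]⟩
  refine ⟨G.map Q.subtype, hGt, fun P hP => ?_⟩
  rw [← map_comap_of_mem P hP]
  exact map_mono (hG (show _ ∈ s by rwa [map_comap_of_mem P hP]))

theorem isFiniteLength_quotient_comap_mono {P K K' : Submodule A M} (hK : K ≤ K')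
    (h : IsFiniteLength A (P ⧸ K.comap P.subtype)) :
    IsFiniteLength A (P ⧸ K'.comap P.subtype) :=
  h.of_surjective (factor_surjective (comap_mono hK))

theorem isFiniteLength_quotient_comap_sup {P₁ P₂ K : Submodule A M}
    (h₁ : IsFiniteLength A (P₁ ⧸ K.comap P₁.subtype))
    (h₂ : IsFiniteLength A (P₂ ⧸ K.comap P₂.subtype)) :
    IsFiniteLength A (↥(P₁ ⊔ P₂) ⧸ K.comap (P₁ ⊔ P₂).subtype) := by
  let f₁ := mapQ (K.comap P₁.subtype) (K.comap (P₁ ⊔ P₂).subtype)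
    (inclusion le_sup_left) fun _ hx => hx
  let f₂ := mapQ (K.comap P₂.subtype) (K.comap (P₁ ⊔ P₂).subtype)
    (inclusion le_sup_right) fun _ hx => hx
  refine (h₁.prod h₂).of_surjective (f := f₁.coprod f₂) ?_
  intro x
  obtain ⟨y, rfl⟩ := mkQ_surjective _ x
  obtain ⟨a, ha, b, hb, hab⟩ := mem_sup.mp y.2
  refine ⟨(Quotient.mk ⟨a, ha⟩, Quotient.mk ⟨b, hb⟩), ?_⟩
  exact congrArg (mkQ _) (Subtype.ext hab)

end Submodule

open Submodule

theorem fdComparable_iff {P N : Submodule A M} :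
    FdComparable P N ↔ IsFiniteLength A (P ⧸ N.comap P.subtype) ∧
      IsFiniteLength A (N ⧸ P.comap N.subtype) := by
  rw [FdComparable, comap_inf, comap_inf, comap_subtype_self, comap_subtype_self, top_inf_eq,
    inf_top_eq]

theorem fdComparable_refl (N : Submodule A M) : FdComparable N N := by
  rw [fdComparable_iff, comap_subtype_self, and_self]
  exact .of_subsingleton

theorem FdComparable.sup {P₁ P₂ N : Submodule A M} (h₁ : FdComparable P₁ N)
    (h₂ : FdComparable P₂ N) : FdComparable (P₁ ⊔ P₂) N := by
  rw [fdComparable_iff] at *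
  exact ⟨isFiniteLength_quotient_comap_sup h₁.1 h₂.1,
    isFiniteLength_quotient_comap_mono le_sup_left h₁.2⟩

end

/-- If `Q` is a Noetherian submodule of `M` and `N ⊆ Q`, then among the submodules
of `Q` that are fd-comparable with `N` there is a greatest one. -/
theorem exists_greatest_fdComparable {A : Type*} [Ring A] {M : Type*} [AddCommGroup M]
    [Module A M] (Q : Submodule A M) (hQ : IsNoetherian A Q) (N : Submodule A M)
    (hNQ : N ≤ Q) :
    ∃ P₀ : Submodule A M, P₀ ≤ Q ∧ FdComparable P₀ N ∧
      ∀ P : Submodule A M, P ≤ Q → FdComparable P N → P ≤ P₀ := by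
  obtain ⟨P₀, ⟨hP₀Q, hP₀N⟩, hP₀⟩ := Submodule.exists_isGreatest_of_supClosed
    (s := {P | P ≤ Q ∧ FdComparable P N}) (fun _ hP => hP.1)
    (fun _ h₁ _ h₂ => ⟨sup_le h₁.1 h₂.1, h₁.2.sup h₂.2⟩) ⟨N, hNQ, fdComparable_refl N⟩
  exact ⟨P₀, hP₀Q, hP₀N, fun P hPQ hPN => hP₀ ⟨hPQ, hPN⟩⟩
end

section
/- Let d ≥ 1 and let (F_i)_{i∈ℤ} be a filtration of V compatible with the ℤ/dℤ-grading such that F_{-1} = 0 and F_{d-1} = V. Then (F_i) is the trivial filtration: F_i = 0 for i < 0, F_i = V_0 + V_1 + ... + V_i (the sum of the components V_j for 0 ≤ j ≤ i) for 0 ≤ i ≤ d−1, and F_i = V for i ≥ d−1. -/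
/-!
Compatibility gives `F n ≤ F m ⊔ ⨆_{m < j ≤ n} V_j` for all `m ≤ n`. With `m = -1` this bounds
`F i` above by `V_0 + ⋯ + V_i`. With `n = d - 1` it gives `V = F j ⊔ ⨆_{j < k ≤ d-1} V_k`, and since
the residues of `j < k ≤ d - 1` differ from that of `j`, projecting an element of `V_j` to its
`j`-component (which preserves the graded submodule `F j`) shows `V_j ≤ F j`.
-/

theorem ZMod.intCast_injOn_Ico (d : ℕ) : Set.InjOn (Int.cast : ℤ → ZMod d) (Set.Ico 0 d) := by
  intro a ha b hb hab
  rwa [ZMod.intCast_eq_intCast_iff', Int.emod_eq_of_lt ha.1 ha.2,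
    Int.emod_eq_of_lt hb.1 hb.2] at hab

theorem le_sup_iSup_Ioc_of_le_sup {α : Type*} [CompleteLattice α] {F G : ℤ → α}
    (h : ∀ i, F i ≤ F (i - 1) ⊔ G i) {m n : ℤ} (hmn : m ≤ n) :
    F n ≤ F m ⊔ ⨆ j ∈ Set.Ioc m n, G j := by
  induction n, hmn using Int.leInduction with
  | base => exact le_sup_left
  | succ n hmn ih =>
    calc F (n + 1) ≤ F n ⊔ G (n + 1) := by simpa using h (n + 1)
      _ ≤ (F m ⊔ ⨆ j ∈ Set.Ioc m n, G j) ⊔ G (n + 1) := sup_le_sup_right ih _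
      _ ≤ F m ⊔ ⨆ j ∈ Set.Ioc m (n + 1), G j := by
        refine sup_le (sup_le_sup_left (iSup₂_le fun j hj => ?_) _) ?_
        · exact le_iSup₂_of_le j ⟨hj.1, hj.2.trans (by omega)⟩ le_rfl
        · exact le_sup_of_le_right (le_iSup₂_of_le (n + 1) ⟨by omega, le_rfl⟩ le_rfl)

namespace DirectSum

variable {ι R V : Type*} [DecidableEq ι] [Semiring R] [AddCommMonoid V] [Module R V]
  (𝒱 : ι → Submodule R V) [Decomposition 𝒱]

theorem decompose_eq_zero_of_mem_iSup_ne {a : ι} {x : V} (hx : x ∈ ⨆ (b) (_ : b ≠ a), 𝒱 b) :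
    decompose 𝒱 x a = 0 := by
  have hker : (⨆ (b) (_ : b ≠ a), 𝒱 b) ≤
      LinearMap.ker (component R ι (fun b => 𝒱 b) a ∘ₗ (decomposeLinearEquiv 𝒱).toLinearMap) :=
    iSup₂_le fun b hba y hy => Subtype.ext (decompose_of_mem_ne 𝒱 hy hba)
  exact hker hx

theorem mem_of_mem_sup_iSup_ne {W : Submodule R V} {a : ι}
    (hW : ∀ w ∈ W, (decompose 𝒱 w a : V) ∈ W) {v : V} (hv : v ∈ 𝒱 a)
    (hvW : v ∈ W ⊔ ⨆ (b) (_ : b ≠ a), 𝒱 b) : v ∈ W := by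
  obtain ⟨w, hw, x, hx, rfl⟩ := Submodule.mem_sup.mp hvW
  have hproj := decompose_of_mem_same 𝒱 hv
  rw [decompose_add, add_apply, decompose_eq_zero_of_mem_iSup_ne 𝒱 hx, add_zero] at hproj
  exact hproj ▸ hW w hw

end DirectSum

theorem compatible_filtration_trivial_general
    {R : Type*} [Ring R] {V : Type*} [AddCommGroup V] [Module R V]
    (d : ℕ)
    (𝒱 : ZMod d → Submodule R V) [DirectSum.Decomposition 𝒱]
    (F : ℤ → Submodule R V)
    (hmono : Monotone F)
    (hgraded : ∀ i : ℤ, ∀ v ∈ F i, ∀ a : ZMod d,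
      ((DirectSum.decompose 𝒱 v a : 𝒱 a) : V) ∈ F i)
    (hcompat : ∀ i : ℤ, F i ≤ F (i - 1) ⊔ 𝒱 (i : ZMod d))
    (hneg : F (-1) = ⊥)
    (htop : F ((d : ℤ) - 1) = ⊤) :
    (∀ i : ℤ, i < 0 → F i = ⊥) ∧
    (∀ i : ℤ, 0 ≤ i → i ≤ (d : ℤ) - 1 →
      F i = ⨆ j ∈ Set.Icc (0 : ℤ) i, 𝒱 (j : ZMod d)) ∧
    (∀ i : ℤ, (d : ℤ) - 1 ≤ i → F i = ⊤) := by
  have hVF : ∀ j : ℤ, 0 ≤ j → j ≤ (d : ℤ) - 1 → 𝒱 (j : ZMod d) ≤ F j := by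
    intro j hj0 hjd v hv
    have hcover := le_sup_iSup_Ioc_of_le_sup hcompat hjd
    rw [htop] at hcover
    have hne : (⨆ k ∈ Set.Ioc j ((d : ℤ) - 1), 𝒱 (k : ZMod d)) ≤
        ⨆ (b) (_ : b ≠ (j : ZMod d)), 𝒱 b :=
      iSup₂_le fun k ⟨hjk, hkd⟩ => le_iSup₂_of_le (k : ZMod d)
        (fun h => hjk.ne' (ZMod.intCast_injOn_Ico d ⟨by omega, by omega⟩ ⟨hj0, by omega⟩ h))
        le_rfl
    exact DirectSum.mem_of_mem_sup_iSup_ne 𝒱 (fun w hw => hgraded j w hw _) hv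
      (sup_le_sup_left hne _ (hcover Submodule.mem_top))
  refine ⟨fun i hi => eq_bot_iff.2 (hneg ▸ hmono (by omega)),
    fun i hi0 hid => le_antisymm ?_ ?_, fun i hi => eq_top_iff.2 (htop ▸ hmono hi)⟩
  · have hIoc : Set.Ioc (-1) i = Set.Icc 0 i := by ext; simp only [Set.mem_Ioc, Set.mem_Icc]; omega
    simpa [hneg, hIoc] using le_sup_iSup_Ioc_of_le_sup hcompat (show -1 ≤ i by omega)
  · exact iSup₂_le fun j hj => (hVF j hj.1 (hj.2.trans hid)).trans (hmono hj.2)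

/-- Lemma 3.10(3): let `V` be a module graded by `ℤ/dℤ` (`d ≥ 1`) and let
`(F i)_{i ∈ ℤ}` be an increasing exhaustive filtration by graded submodules which
is compatible with the grading in the sense that `F i ⊆ F (i-1) + V_{i mod d}`.
If `F (-1) = 0` and `F (d-1) = V`, then `F` is the trivial filtration:
`F i = 0` for `i < 0`, `F i = V_0 + ⋯ + V_i` for `0 ≤ i ≤ d-1`, and `F i = V`
for `i ≥ d-1`. -/
theorem compatible_filtration_trivial
    {R : Type*} [Ring R] {V : Type*} [AddCommGroup V] [Module R V]
    (d : ℕ) (hd : 1 ≤ d)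
    (𝒱 : ZMod d → Submodule R V) [DirectSum.Decomposition 𝒱]
    (F : ℤ → Submodule R V)
    (hmono : Monotone F)
    (hexh : (⨆ i : ℤ, F i) = ⊤)
    (hgraded : ∀ i : ℤ, ∀ v ∈ F i, ∀ a : ZMod d,
      ((DirectSum.decompose 𝒱 v a : 𝒱 a) : V) ∈ F i)
    (hcompat : ∀ i : ℤ, F i ≤ F (i - 1) ⊔ 𝒱 (i : ZMod d))
    (hneg : F (-1) = ⊥)
    (htop : F ((d : ℤ) - 1) = ⊤) :
    (∀ i : ℤ, i < 0 → F i = ⊥) ∧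
    (∀ i : ℤ, 0 ≤ i → i ≤ (d : ℤ) - 1 →
      F i = ⨆ j ∈ Set.Icc (0 : ℤ) i, 𝒱 (j : ZMod d)) ∧
    (∀ i : ℤ, (d : ℤ) - 1 ≤ i → F i = ⊤) :=
  compatible_filtration_trivial_general d 𝒱 F hmono hgraded hcompat hneg htop
end
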